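/- In the automaton group of automaton 861, the element c has infinite order. (One has c(010) = 010 and c|_{010} = c, while c^n(1^∞) ∼ 1^∞ for all n ≥ 0 but c^{-1}(1^∞) = (10)^∞, which is not shift-equivalent via the required form.) -/

import Mathlib

/-!
Reading `11` from any state leads to `b`, which copies `1^∞`; hence every state, and so every
power `cⁿ`, maps words ending in `1^∞` to words ending in `1^∞`. On `(10)^∞` the run of `c`
alternates between `c` and `a`, so `c((10)^∞) = 1^∞`. If `cⁿ = 1` with `n ≥ 1`, then
`c⁻¹ = cⁿ⁻¹` would map `1^∞` to a word ending in `1^∞`, yet `c⁻¹(1^∞) = (10)^∞`.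
For the prefix `010`, the run of `c` returns to `c` and the output is `010`.
-/

namespace Stmt5


/-- A Mealy automaton over the binary alphabet with state set `S`. -/
structure Mealy (S : Type) where
  /-- transition function -/
  δ : S → Bool → S
  /-- output function -/
  τ : S → Bool → Bool

namespace Mealy

variable {S : Type} (M : Mealy S)

/-- The state reached from `q` after reading the first `n` letters of `w`. -/
def stateAt (q : S) (w : ℕ → Bool) : ℕ → S
  | 0 => q
  | n + 1 => M.δ (stateAt q w n) (w n)

/-- The action of state `q` on infinite words. -/
def act (q : S) (w : ℕ → Bool) : ℕ → Bool :=
  fun n => M.τ (M.stateAt q w n) (w n)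

/-- The inverse automaton (for automata whose output functions are involutions). -/
def inv : Mealy S := ⟨fun q b => M.δ q (M.τ q b), M.τ⟩

theorem stateAt_inv_act (h : ∀ q b, M.τ q (M.τ q b) = b) (q : S) (w : ℕ → Bool) :
    ∀ n, M.inv.stateAt q (M.act q w) n = M.stateAt q w n := by
  intro n
  induction n with
  | zero => rfl
  | succ n ih =>
    show M.inv.δ (M.inv.stateAt q (M.act q w) n) (M.act q w n) = M.δ (M.stateAt q w n) (w n)
    rw [ih]
    show M.δ (M.stateAt q w n) (M.τ (M.stateAt q w n) (M.τ (M.stateAt q w n) (w n))) = _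
    rw [h]

theorem inv_act (h : ∀ q b, M.τ q (M.τ q b) = b) (q : S) (w : ℕ → Bool) :
    M.inv.act q (M.act q w) = w := by
  funext n
  show M.inv.τ (M.inv.stateAt q (M.act q w) n) (M.act q w n) = w n
  rw [stateAt_inv_act M h]
  show M.τ (M.stateAt q w n) (M.τ (M.stateAt q w n) (w n)) = w n
  rw [h]

theorem inv_inv (h : ∀ q b, M.τ q (M.τ q b) = b) : M.inv.inv = M := by
  obtain ⟨d, t⟩ := M
  simp only [inv]
  congr 1
  funext q b
  exact congrArg (d q) (h q b)

/-- The permutation of the set of infinite binary words defined by state `q`. -/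
def perm (h : ∀ q b, M.τ q (M.τ q b) = b) (q : S) : Equiv.Perm (ℕ → Bool) where
  toFun := M.act q
  invFun := M.inv.act q
  left_inv := fun w => M.inv_act h q w
  right_inv := fun w => by
    have h2 : ∀ q b, M.inv.τ q (M.inv.τ q b) = b := h
    have := M.inv.inv_act h2 q w
    rwa [M.inv_inv h] at this

end Mealy

/-- Prepend a finite word to an infinite word. -/
def cat (u : List Bool) (w : ℕ → Bool) : ℕ → Bool :=
  fun n => u.getD n (w (n - u.length))

/-- The (semantic) restriction of a transformation of infinite words to the
subtree indexed by the finite word `u`. -/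
def resW (f : (ℕ → Bool) → ℕ → Bool) (u : List Bool) : (ℕ → Bool) → ℕ → Bool :=
  fun w n => f (cat u w) (n + u.length)

/-- The periodic infinite word with period `u`. -/
def per (u : List Bool) : ℕ → Bool := fun n => u.getD (n % u.length) false

/-- Left-shift equivalence of infinite words: they share a common infinite tail. -/
def seq (u v : ℕ → Bool) : Prop := ∃ k l : ℕ, ∀ n, u (n + k) = v (n + l)

inductive St : Type
  | a | b | c
deriving DecidableEq

instance : Fintype St :=
  ⟨⟨↑[St.a, St.b, St.c], by decide⟩, fun x => by cases x <;> decide⟩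

/-- Automaton 861. -/
def M : Mealy St where
  δ := fun q x => match q, x with
    | .a, false => .c | .a, true => .b
    | .b, false => .c | .b, true => .b
    | .c, false => .b | .c, true => .a
  τ := fun q x => match q with
    | .a => !x
    | .b => x
    | .c => x

theorem M_inv : ∀ q x, M.τ q (M.τ q x) = x := by decide

/-- The automorphism of the binary tree boundary defined by state `a`. -/
def a : Equiv.Perm (ℕ → Bool) := M.perm M_inv .a

/-- The automorphism of the binary tree boundary defined by state `b`. -/
def b : Equiv.Perm (ℕ → Bool) := M.perm M_inv .b

/-- The automorphism of the binary tree boundary defined by state `c`. -/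
def c : Equiv.Perm (ℕ → Bool) := M.perm M_inv .c

namespace Mealy

variable {S : Type} (M : Mealy S)

theorem stateAt_add (q : S) (w : ℕ → Bool) (k n : ℕ) :
    M.stateAt q w (n + k) = M.stateAt (M.stateAt q w k) (fun i => w (i + k)) n := by
  induction n with
  | zero => simp only [stateAt, Nat.zero_add]
  | succ n ih =>
    rw [Nat.succ_add]
    simp only [stateAt, ih]

theorem act_add (q : S) (w : ℕ → Bool) (k n : ℕ) :
    M.act q w (n + k) = M.act (M.stateAt q w k) (fun i => w (i + k)) n := by
  simp only [act, stateAt_add]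

theorem act_periodic {q : S} {w : ℕ → Bool} {k : ℕ} (hw : Function.Periodic w k)
    (hq : M.stateAt q w k = q) : Function.Periodic (M.act q w) k := fun n => by
  rw [act_add, hq, funext hw]

end Mealy

theorem cat_add_length (u : List Bool) (w : ℕ → Bool) (n : ℕ) :
    cat u w (n + u.length) = w n := by
  simp [cat, List.getD]

theorem per_periodic (u : List Bool) : Function.Periodic (per u) u.length := fun n => by
  simp [per]

theorem pow_ne_one_of_inv_apply_notMem {α : Type*} {g : Equiv.Perm α} {P : Set α} {x : α}
    (hpow : ∀ n : ℕ, (g ^ n) x ∈ P) (hinv : g⁻¹ x ∉ P) {n : ℕ} (hn : 1 ≤ n) : g ^ n ≠ 1 := by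
  intro h
  have hinv_eq : g⁻¹ = g ^ (n - 1) :=
    inv_eq_of_mul_eq_one_right (by rw [← pow_succ', Nat.sub_add_cancel hn, h])
  exact hinv (hinv_eq ▸ hpow (n - 1))

theorem c_cat_010 (w : ℕ → Bool) :
    c (cat [false, true, false] w) = cat [false, true, false] (c w) := by
  funext n
  match n with
  | 0 | 1 | 2 => rfl
  | m + 3 =>
    change M.act .c (cat [false, true, false] w) (m + [false, true, false].length) =
      cat [false, true, false] (M.act .c w) (m + [false, true, false].length)
    rw [M.act_add, cat_add_length, funext (cat_add_length _ w)]
    rfl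

theorem stateAt_b_const_true (n : ℕ) : M.stateAt .b (fun _ => true) n = .b := by
  induction n with
  | zero => rfl
  | succ n ih => simp only [Mealy.stateAt, ih]; rfl

theorem act_const_true_add_two (q : St) (n : ℕ) : M.act q (fun _ => true) (n + 2) = true := by
  have hb : M.stateAt q (fun _ => true) 2 = .b := by cases q <;> rfl
  rw [M.act_add, hb]
  simp only [Mealy.act, stateAt_b_const_true]
  rfl

theorem seq_act_const_true {w : ℕ → Bool} (hw : seq w fun _ => true) (q : St) :
    seq (M.act q w) fun _ => true := by
  obtain ⟨k, l, hk⟩ := hw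
  refine ⟨2 + k, 0, fun n => ?_⟩
  rw [← Nat.add_assoc, M.act_add, funext hk]
  exact act_const_true_add_two _ n

theorem seq_pow_c_const_true (n : ℕ) : seq (⇑(c ^ n) fun _ => true) fun _ => true := by
  induction n with
  | zero => exact ⟨0, 0, fun _ => rfl⟩
  | succ n ih =>
    rw [pow_succ', Equiv.Perm.mul_apply]
    exact seq_act_const_true ih .c

theorem c_per_true_false : c (per [true, false]) = fun _ => true := by
  have hc : Function.Periodic (c (per [true, false])) 2 :=
    M.act_periodic (per_periodic [true, false]) rfl
  funext n
  rw [← hc.map_mod_nat n]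
  have hn : n % 2 < 2 := Nat.mod_lt n (by norm_num)
  interval_cases n % 2 <;> rfl

theorem c_inv_const_true : ⇑c⁻¹ (fun _ => true) = per [true, false] := by
  rw [← c_per_true_false]
  exact c.symm_apply_apply _

theorem not_seq_per_true_false : ¬ seq (per [true, false]) fun _ => true := by
  rintro ⟨k, l, hk⟩
  have hodd : (k + 1 + k) % 2 = 1 := by omega
  have := hk (k + 1)
  rw [← (per_periodic [true, false]).map_mod_nat, show [true, false].length = 2 from rfl,
    hodd] at this
  exact Bool.false_ne_true this

/-- In the automaton group of automaton 861, the element `c` has infinite order.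
One has `c(010) = 010` and `c|₀₁₀ = c`, while `cⁿ(1^∞) ∼ 1^∞` for all `n ≥ 0` but
`c⁻¹(1^∞) = (10)^∞`. -/
theorem automaton861_c_infinite_order :
    (∀ w : ℕ → Bool, c (cat [false, true, false] w) = cat [false, true, false] (c w)) ∧
    (∀ n : ℕ, seq (⇑(c ^ n) (fun _ => true)) (fun _ => true)) ∧
    (⇑c⁻¹ (fun _ => true) = per [true, false]) ∧
    (∀ n : ℕ, 1 ≤ n → c ^ n ≠ 1) :=
  ⟨c_cat_010, seq_pow_c_const_true, c_inv_const_true, fun _ hn =>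
    pow_ne_one_of_inv_apply_notMem (P := {w | seq w fun _ => true}) seq_pow_c_const_true
      (by rw [Set.mem_ofPred_eq, c_inv_const_true]; exact not_seq_per_true_false) hn⟩

end Stmt5
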